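/- arXiv:2305.00466 — 3 statements merged into one kernel-verified Lean document; each statement's English description precedes it below -/
import Mathlib

section
/- Let Ω be a set, let x̂_1, …, x̂_M ∈ Ω be points and let r_1, …, r_M : Ω → ℝ be functions satisfying, for each j = 1, …, M: (i) r_j(x̂_i) = 0 for every i < j; (ii) |r_j(x)| ≤ |r_j(x̂_j)| for every x ∈ Ω (x̂_j is a point of maximal absolute value of r_j); and (iii) r_j(x̂_j) ≠ 0. Define ψ_j(x) = r_j(x)/r_j(x̂_j) and the matrix B ∈ ℝ^{M×M} by B_{ij} = ψ_j(x̂_i). Then B is lower triangular with unit diagonal, i.e. B_{ij} = 0 for i < j, B_{jj} = 1, and |B_{ij}| ≤ 1 for all i > j; consequently B is invertible. -/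
/-- Structural conclusion of Theorem 1 of the paper: the interpolation matrix
generated by the (first-order) empirical interpolation procedure is lower
triangular with unity diagonal, off-diagonal entries of absolute value at most
one, and hence invertible. -/
theorem eim_matrix_lower_triangular_unit_diagonal
    {Ω : Type*} {M : ℕ} (xhat : Fin M → Ω) (r : Fin M → Ω → ℝ)
    (hzero : ∀ j i : Fin M, i < j → r j (xhat i) = 0)
    (hmax : ∀ (j : Fin M) (x : Ω), |r j x| ≤ |r j (xhat j)|)
    (hne : ∀ j : Fin M, r j (xhat j) ≠ 0)
    (ψ : Fin M → Ω → ℝ)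
    (hψ : ∀ j x, ψ j x = r j x / r j (xhat j))
    (B : Matrix (Fin M) (Fin M) ℝ)
    (hBdef : ∀ i j, B i j = ψ j (xhat i)) :
    (∀ i j : Fin M, i < j → B i j = 0) ∧
    (∀ j : Fin M, B j j = 1) ∧
    (∀ i j : Fin M, j < i → |B i j| ≤ 1) ∧
    IsUnit B := by
  have h1 : ∀ i j : Fin M, i < j → B i j = 0 := by
    intro i j hij
    rw [hBdef, hψ, hzero j i hij, zero_div]
  have h2 : ∀ j : Fin M, B j j = 1 := by
    intro j
    rw [hBdef, hψ, div_self (hne j)]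
  have h3 : ∀ i j : Fin M, j < i → |B i j| ≤ 1 := by
    intro i j _
    rw [hBdef, hψ, abs_div]
    exact div_le_one_of_le₀ (hmax j (xhat i)) (abs_nonneg _)
  refine ⟨h1, h2, h3, ?_⟩
  have hlt : B.BlockTriangular (OrderDual.toDual : Fin M → (Fin M)ᵒᵈ) := by
    intro i j hij
    exact h1 i j hij
  have hdet : B.det = 1 := by
    rw [Matrix.det_of_lowerTriangular B hlt]
    simp [h2]
  rw [Matrix.isUnit_iff_isUnit_det, hdet]
  exact isUnit_one
end

section
/- Let B ∈ ℝ^{M×M} be a lower triangular matrix with unit diagonal (B_{ij} = 0 for i < j and B_{ii} = 1) whose strictly lower triangular entries satisfy |B_{ij}| ≤ 1 for all i > j. Then B is invertible and the entries of its inverse satisfy: (B^{−1})_{ij} = 0 for i < j, (B^{−1})_{ii} = 1, and |(B^{−1})_{ij}| ≤ 2^{i−j−1} for all i > j. -/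
private lemma geom_aux (n : ℕ) : (∑ d ∈ Finset.range n, (2:ℝ)^d) = 2^n - 1 := by
  induction n with
  | zero => simp
  | succ n ih => rw [Finset.sum_range_succ, ih]; ring

private lemma sum_aux {a b : ℕ} (h : a < b) :
    (1:ℝ) + ∑ k ∈ Finset.Ioo a b, (2:ℝ)^(k - a - 1) = 2^(b - a - 1) := by
  have : Finset.Ioo a b = Finset.Ico (a+1) b := by
    ext k; simp only [Finset.mem_Ioo, Finset.mem_Ico]; omega
  rw [this, Finset.sum_Ico_eq_sum_range]
  have h2 : ∀ d ∈ Finset.range (b - (a+1)), (2:ℝ)^(a + 1 + d - a - 1) = 2^d := by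
    intro d _; congr 1; omega
  rw [Finset.sum_congr rfl h2, geom_aux]
  have : b - (a+1) = b - a - 1 := by omega
  rw [this]; ring

/-- Entrywise bound for the inverse of the empirical-interpolation matrix:
if `B` is lower triangular with unit diagonal and strictly lower entries of
absolute value at most `1`, then `B` is invertible and its inverse is lower
triangular with unit diagonal and `|(B⁻¹)_{ij}| ≤ 2^(i-j-1)` for `i > j`. -/
theorem eim_inverse_entry_bound
    {M : ℕ} (B : Matrix (Fin M) (Fin M) ℝ)
    (htri : ∀ i j : Fin M, i < j → B i j = 0)
    (hdiag : ∀ i : Fin M, B i i = 1)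
    (hlow : ∀ i j : Fin M, j < i → |B i j| ≤ 1) :
    IsUnit B ∧
    (∀ i j : Fin M, i < j → B⁻¹ i j = 0) ∧
    (∀ i : Fin M, B⁻¹ i i = 1) ∧
    (∀ i j : Fin M, j < i → |B⁻¹ i j| ≤ 2 ^ ((i : ℕ) - (j : ℕ) - 1)) := by
  have hbt : B.BlockTriangular OrderDual.toDual := by
    intro i j hij
    exact htri i j hij
  have hdet : B.det = 1 := by
    rw [Matrix.det_of_lowerTriangular B hbt]
    simp [hdiag]
  have hdetu : IsUnit B.det := by rw [hdet]; exact isUnit_one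
  have hunit : IsUnit B := (Matrix.isUnit_iff_isUnit_det B).mpr hdetu
  haveI : Invertible B := B.invertibleOfIsUnitDet hdetu
  have hinvtri : ∀ i j : Fin M, i < j → B⁻¹ i j = 0 := by
    intro i j hij
    exact Matrix.blockTriangular_inv_of_blockTriangular hbt hij
  have hmul : B * B⁻¹ = 1 := Matrix.mul_nonsing_inv B hdetu
  -- key entry identity
  have hentry : ∀ i j : Fin M, (∑ k, B i k * B⁻¹ k j) = (1 : Matrix (Fin M) (Fin M) ℝ) i j := by
    intro i j
    rw [← Matrix.mul_apply, hmul]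
  have hinvdiag : ∀ i : Fin M, B⁻¹ i i = 1 := by
    intro i
    have h := hentry i i
    rw [Matrix.one_apply_eq] at h
    have hsingle : (∑ k, B i k * B⁻¹ k i) = B i i * B⁻¹ i i := by
      apply Finset.sum_eq_single
      · intro k _ hk
        rcases lt_or_gt_of_ne hk with hlt | hgt
        · rw [hinvtri k i hlt, mul_zero]
        · rw [htri i k hgt, zero_mul]
      · intro h; exact absurd (Finset.mem_univ i) h
    rw [hsingle, hdiag, one_mul] at h
    exact h
  refine ⟨hunit, hinvtri, hinvdiag, ?_⟩
  suffices key : ∀ n : ℕ, ∀ i j : Fin M, (i : ℕ) = n → j < i →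
      |B⁻¹ i j| ≤ 2 ^ ((i : ℕ) - (j : ℕ) - 1) by
    intro i j hji; exact key (i : ℕ) i j rfl hji
  intro n
  induction n using Nat.strong_induction_on with
  | _ n IHn =>
    intro i j hn hji
    have IH : ∀ k : Fin M, k < i → ∀ j : Fin M, j < k →
        |B⁻¹ k j| ≤ 2 ^ ((k : ℕ) - (j : ℕ) - 1) := by
      intro k hk j' hj'
      exact IHn (k : ℕ) (hn ▸ hk) k j' rfl hj'
    have h := hentry i j
    rw [Matrix.one_apply_ne (ne_of_gt hji)] at h
    -- restrict the sum to Icc j i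
    have hsub : (∑ k, B i k * B⁻¹ k j) = ∑ k ∈ Finset.Icc j i, B i k * B⁻¹ k j := by
      symm
      apply Finset.sum_subset (Finset.subset_univ _)
      intro k _ hk
      rw [Finset.mem_Icc, not_and_or] at hk
      rcases hk with hk | hk
      · rw [hinvtri k j (lt_of_not_ge hk), mul_zero]
      · rw [htri i k (lt_of_not_ge hk), zero_mul]
    rw [hsub, Finset.Icc_eq_cons_Ico (le_of_lt hji), Finset.sum_cons, hdiag, one_mul] at h
    have heq : B⁻¹ i j = -∑ k ∈ Finset.Ico j i, B i k * B⁻¹ k j := by linarith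
    rw [heq, abs_neg]
    have hsplit : (∑ k ∈ Finset.Ico j i, |B i k * B⁻¹ k j|)
        = |B i j * B⁻¹ j j| + ∑ k ∈ Finset.Ioo j i, |B i k * B⁻¹ k j| := by
      rw [← Finset.Ioo_insert_left hji, Finset.sum_insert Finset.left_notMem_Ioo]
    have habs : |∑ k ∈ Finset.Ico j i, B i k * B⁻¹ k j|
        ≤ |B i j * B⁻¹ j j| + ∑ k ∈ Finset.Ioo j i, |B i k * B⁻¹ k j| :=
      hsplit ▸ Finset.abs_sum_le_sum_abs _ _
    have hterm1 : |B i j * B⁻¹ j j| ≤ 1 := by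
      rw [hinvdiag, mul_one]; exact hlow i j hji
    have hterm2 : ∀ k ∈ Finset.Ioo j i, |B i k * B⁻¹ k j| ≤ (2:ℝ)^((k:ℕ) - (j:ℕ) - 1) := by
      intro k hk
      rw [Finset.mem_Ioo] at hk
      rw [abs_mul]
      calc |B i k| * |B⁻¹ k j| ≤ 1 * (2:ℝ)^((k:ℕ) - (j:ℕ) - 1) := by
            apply mul_le_mul (hlow i k hk.2) (IH k hk.2 j hk.1) (abs_nonneg _) zero_le_one
        _ = (2:ℝ)^((k:ℕ) - (j:ℕ) - 1) := one_mul _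
    have hbound : |B i j * B⁻¹ j j| + ∑ k ∈ Finset.Ioo j i, |B i k * B⁻¹ k j|
        ≤ 1 + ∑ k ∈ Finset.Ioo j i, (2:ℝ)^((k:ℕ) - (j:ℕ) - 1) := by
      exact add_le_add hterm1 (Finset.sum_le_sum hterm2)
    have hfin : (∑ k ∈ Finset.Ioo j i, (2:ℝ)^((k:ℕ) - (j:ℕ) - 1))
        = ∑ k ∈ Finset.Ioo (j:ℕ) (i:ℕ), (2:ℝ)^(k - (j:ℕ) - 1) := by
      rw [← Fin.map_valEmbedding_Ioo, Finset.sum_map]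
      rfl
    calc |∑ k ∈ Finset.Ico j i, B i k * B⁻¹ k j|
        ≤ |B i j * B⁻¹ j j| + ∑ k ∈ Finset.Ioo j i, |B i k * B⁻¹ k j| := habs
      _ ≤ 1 + ∑ k ∈ Finset.Ioo j i, (2:ℝ)^((k:ℕ) - (j:ℕ) - 1) := hbound
      _ = 2 ^ ((i:ℕ) - (j:ℕ) - 1) := by rw [hfin]; exact sum_aux hji
end

section
/- Let Ω be a set, let ψ_1, …, ψ_M : Ω → ℝ be functions with |ψ_j(x)| ≤ 1 for all x ∈ Ω and all j, and let x̂_1, …, x̂_M ∈ Ω be points such that the matrix B ∈ ℝ^{M×M} with entries B_{ij} = ψ_j(x̂_i) is lower triangular with unit diagonal and satisfies |B_{ij}| ≤ 1 for all i > j. Then the Lebesgue sum is uniformly bounded: for every x ∈ Ω, Σ_{k=1}^M | Σ_{m=1}^M ψ_m(x) (B^{−1})_{mk} | ≤ 2^M − 1; i.e. the Lebesgue constant Λ_M of the empirical interpolation satisfies Λ_M ≤ 2^M − 1. -/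
/-- The paper's bound on the Lebesgue constant of the empirical interpolation:
if the basis functions satisfy `‖ψ_j‖_∞ ≤ 1` and the interpolation matrix is
lower triangular with unit diagonal and strictly lower entries of absolute
value at most `1`, then the Lebesgue sum is bounded by `2^M - 1`. -/
theorem eim_lebesgue_constant_bound
    {Ω : Type*} {M : ℕ} (ψ : Fin M → Ω → ℝ) (xhat : Fin M → Ω)
    (hψ : ∀ (j : Fin M) (x : Ω), |ψ j x| ≤ 1)
    (B : Matrix (Fin M) (Fin M) ℝ)
    (hBdef : ∀ i j, B i j = ψ j (xhat i))
    (htri : ∀ i j : Fin M, i < j → B i j = 0)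
    (hdiag : ∀ i : Fin M, B i i = 1)
    (hlow : ∀ i j : Fin M, j < i → |B i j| ≤ 1) :
    ∀ x, ∑ k, |∑ m, ψ m x * B⁻¹ m k| ≤ 2 ^ M - 1 := by
  intro x
  -- B is invertible with det 1
  have hdet : B.det = 1 := by
    rw [Matrix.det_of_lowerTriangular B (fun i j h => htri i j h)]
    simp [hdiag]
  have hinv : B⁻¹ * B = 1 := Matrix.nonsing_inv_mul B (by simp [hdet])
  set c : Fin M → ℝ := fun k => ∑ m, ψ m x * B⁻¹ m k with hcdef
  have hc : ∀ j, ∑ k, c k * B k j = ψ j x := by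
    intro j
    calc ∑ k, c k * B k j = ∑ m, ψ m x * ∑ k, B⁻¹ m k * B k j := by
          simp only [hcdef, Finset.sum_mul, Finset.mul_sum, mul_assoc]
          rw [Finset.sum_comm]
      _ = ∑ m, ψ m x * (1 : Matrix (Fin M) (Fin M) ℝ) m j := by
          simp_rw [← Matrix.mul_apply, hinv]
      _ = ψ j x := by simp [Matrix.one_apply]
  -- key pointwise bound
  have hkey : ∀ j : Fin M,
      |c j| ≤ 1 + ∑ k ∈ Finset.univ.filter (fun k => j < k), |c k| := by
    intro j
    have hsplit : ∑ k, c k * B k j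
        = (∑ k ∈ Finset.univ.filter (fun k => j < k), c k * B k j)
          + ∑ k ∈ Finset.univ.filter (fun k => ¬ j < k), c k * B k j :=
      (Finset.sum_filter_add_sum_filter_not _ _ _).symm
    have h2 : ∑ k ∈ Finset.univ.filter (fun k => ¬ j < k), c k * B k j = c j := by
      rw [Finset.sum_eq_single j]
      · rw [hdiag, mul_one]
      · intro b hb hbj
        have hble : b ≤ j := le_of_not_gt (Finset.mem_filter.mp hb).2
        rw [htri b j (lt_of_le_of_ne hble hbj), mul_zero]
      · intro h; exact absurd (Finset.mem_filter.mpr ⟨Finset.mem_univ j, lt_irrefl j⟩) h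
    have hcj : c j = ψ j x - ∑ k ∈ Finset.univ.filter (fun k => j < k), c k * B k j := by
      rw [← hc j, hsplit, h2]; ring
    rw [hcj]
    calc |ψ j x - ∑ k ∈ Finset.univ.filter (fun k => j < k), c k * B k j|
        ≤ |ψ j x| + |∑ k ∈ Finset.univ.filter (fun k => j < k), c k * B k j| :=
          abs_sub _ _
      _ ≤ 1 + ∑ k ∈ Finset.univ.filter (fun k => j < k), |c k| := by
          gcongr
          · exact hψ j x
          · calc |∑ k ∈ Finset.univ.filter (fun k => j < k), c k * B k j|
                ≤ ∑ k ∈ Finset.univ.filter (fun k => j < k), |c k * B k j| :=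
                  Finset.abs_sum_le_sum_abs _ _
              _ ≤ ∑ k ∈ Finset.univ.filter (fun k => j < k), |c k| := by
                  apply Finset.sum_le_sum
                  intro k hk
                  rw [abs_mul]
                  exact mul_le_of_le_one_right (abs_nonneg _)
                    (hlow k j (Finset.mem_filter.mp hk).2)
  -- tail sums
  set g : ℕ → ℝ := fun n => ∑ k ∈ Finset.univ.filter (fun k : Fin M => n ≤ k.val), |c k|
    with hgdef
  have hg : ∀ d n, M - n ≤ d → g n ≤ 2 ^ (M - n) - 1 := by
    intro d
    induction d with
    | zero =>
      intro n hn
      have hMn : M ≤ n := by omega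
      have : Finset.univ.filter (fun k : Fin M => n ≤ k.val) = ∅ := by
        ext k; simp; omega
      simp [hgdef, this, Nat.sub_eq_zero_of_le hMn]
    | succ d ih =>
      intro n hn
      by_cases hMn : M ≤ n
      · have : Finset.univ.filter (fun k : Fin M => n ≤ k.val) = ∅ := by
          ext k; simp; omega
        simp [hgdef, this, Nat.sub_eq_zero_of_le hMn]
      · push_neg at hMn
        set j : Fin M := ⟨n, hMn⟩ with hj
        have hset : Finset.univ.filter (fun k : Fin M => n ≤ k.val)
            = insert j (Finset.univ.filter (fun k : Fin M => n + 1 ≤ k.val)) := by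
          ext k
          simp [Finset.mem_insert, Fin.ext_iff, hj]
          omega
        have hjnot : j ∉ Finset.univ.filter (fun k : Fin M => n + 1 ≤ k.val) := by
          simp [hj]
        have hgsplit : g n = |c j| + g (n + 1) := by
          rw [hgdef]; simp only [hset]
          rw [Finset.sum_insert hjnot]
        have hfeq : Finset.univ.filter (fun k : Fin M => j < k)
            = Finset.univ.filter (fun k : Fin M => n + 1 ≤ k.val) := by
          ext k
          simp [Fin.lt_def, hj]
        have hcb : |c j| ≤ 1 + g (n + 1) := by
          have := hkey j
          rwa [hfeq] at this
        have hgt : g (n + 1) ≤ 2 ^ (M - (n + 1)) - 1 := ih (n + 1) (by omega)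
        have hpow : (2 : ℝ) ^ (M - n) = 2 * 2 ^ (M - (n + 1)) := by
          rw [← pow_succ']
          congr 1
          omega
        rw [hgsplit, hpow]
        nlinarith
  have h0 : ∑ k, |c k| = g 0 := by
    rw [hgdef]
    congr 1
    ext k; simp
  calc ∑ k, |∑ m, ψ m x * B⁻¹ m k| = ∑ k, |c k| := rfl
    _ = g 0 := h0
    _ ≤ 2 ^ (M - 0) - 1 := hg M 0 (by omega)
    _ = 2 ^ M - 1 := by norm_num
end
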